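/- Let $A, B, X \in \mathbb{M}_n$ be such that the block matrix $M = \begin{bmatrix} A & X \\ X^* & B \end{bmatrix} \in \mathbb{M}_{2n}$ is positive semi-definite and $X$ is accretive, i.e. $\mathrm{Re}\,X = (X+X^*)/2$ is positive semi-definite. Then for every symmetric norm $\|\cdot\|$ one has $\| M \| \le \| A + B \| + \| \mathrm{Re}\,X \|$. -/

import Mathlib

open Matrix
open scoped ComplexOrder

/-- The absolute value `|Z| = (Zᴴ Z)^(1/2)` of a square complex matrix. -/
noncomputable def matAbs {m : Type*} [Fintype m] [DecidableEq m]
    (Z : Matrix m m ℂ) : Matrix m m ℂ :=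
  (Matrix.posSemidef_conjTranspose_mul_self Z).1.eigenvectorUnitary.1 *
    Matrix.diagonal (fun i => ((Real.sqrt ((Matrix.posSemidef_conjTranspose_mul_self Z).1.eigenvalues i) : ℝ) : ℂ)) *
    (star (Matrix.posSemidef_conjTranspose_mul_self Z).1.eigenvectorUnitary : Matrix m m ℂ)

/-- Functional calculus: apply `f : ℝ → ℝ` to the eigenvalues of a Hermitian matrix
(junk value `0` if the matrix is not Hermitian). -/
noncomputable def hermApply {m : Type*} [Fintype m] [DecidableEq m]
    (f : ℝ → ℝ) (S : Matrix m m ℂ) : Matrix m m ℂ :=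
  if hS : S.IsHermitian then
    (hS.eigenvectorUnitary : Matrix m m ℂ) *
      Matrix.diagonal (fun i => (f (hS.eigenvalues i) : ℂ)) *
      (star (hS.eigenvectorUnitary : Matrix m m ℂ))
  else 0

/-- Real power of a positive semi-definite matrix by functional calculus. -/
noncomputable def matPow {m : Type*} [Fintype m] [DecidableEq m]
    (S : Matrix m m ℂ) (p : ℝ) : Matrix m m ℂ :=
  hermApply (fun x => x ^ p) S

/-- A symmetric (unitarily invariant) norm on complex `m × m` matrices. -/
structure IsSymmetricNorm {m : Type*} [Fintype m] [DecidableEq m]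
    (N : Matrix m m ℂ → ℝ) : Prop where
  add_le : ∀ A B, N (A + B) ≤ N A + N B
  smul : ∀ (c : ℂ) (A), N (c • A) = ‖c‖ * N A
  eq_zero_of : ∀ A, N A = 0 → A = 0
  unitary_mul_left : ∀ (U : Matrix.unitaryGroup m ℂ) (A), N (U * A) = N A
  mul_unitary_right : ∀ (U : Matrix.unitaryGroup m ℂ) (A), N (A * U) = N A

/-- Eigenvalues of a Hermitian matrix (junk value `0` if not Hermitian). -/
noncomputable def eigVals {m : Type*} [Fintype m] [DecidableEq m]
    (Z : Matrix m m ℂ) : m → ℝ :=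
  if hZ : Z.IsHermitian then hZ.eigenvalues else 0

/-- Eigenvalues of a Hermitian `n × n` matrix listed in decreasing order. -/
noncomputable def eigDown {n : ℕ} (Z : Matrix (Fin n) (Fin n) ℂ) : Fin n → ℝ :=
  fun i => (eigVals Z ∘ Tuple.sort (eigVals Z)) i.rev

/-- `Z ^ ↓`: the diagonal matrix listing the eigenvalues of `Z` in decreasing order. -/
noncomputable def downMat {n : ℕ} (Z : Matrix (Fin n) (Fin n) ℂ) : Matrix (Fin n) (Fin n) ℂ :=
  Matrix.diagonal (fun i => (eigDown Z i : ℂ))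

/-- Schatten `p`-norm. -/
noncomputable def schattenNorm {m : Type*} [Fintype m] [DecidableEq m]
    (p : ℝ) (Z : Matrix m m ℂ) : ℝ :=
  (∑ i, eigVals (matAbs Z) i ^ p) ^ (1 / p)

/-- Operator norm (largest singular value). -/
noncomputable def opNormInf {m : Type*} [Fintype m] [DecidableEq m]
    (Z : Matrix m m ℂ) : ℝ :=
  ⨆ i, Real.sqrt (eigVals (Zᴴ * Z) i)

/-- Numerical range. -/
def numRange {m : Type*} [Fintype m] (X : Matrix m m ℂ) : Set ℂ :=
  {z | ∃ x : m → ℂ, ∑ i, ‖x i‖ ^ 2 = 1 ∧ dotProduct (star x) (X *ᵥ x) = z}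

/-- Numerical radius. -/
noncomputable def numRadius {m : Type*} [Fintype m] (X : Matrix m m ℂ) : ℝ :=
  sSup ((fun z : ℂ => ‖z‖) '' numRange X)

/-!
Conjugating `M` by the unitary `(1/√2) [1 1; -1 1]` gives a positive semidefinite matrix
with diagonal blocks `P + Re X` and `P - Re X`, where `P = (A + B) / 2`. A positive
semidefinite `H = Q²` splits as `Q P₁ Q + Q P₂ Q` along the two coordinate projections,
and `Q Pᵢ Q` has the same symmetric norm as `Pᵢ H Pᵢ` because `Z Zᴴ` and `Zᴴ Z` are
unitarily similar. Hence `‖M‖ ≤ ‖(P + Re X) ⊕ 0‖ + ‖0 ⊕ (P - Re X)‖`. The first term is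
at most `‖P ⊕ 0‖ + ‖Re X ⊕ 0‖`, and since `Re X ≥ 0`, monotonicity of symmetric norms on
positive matrices bounds the second by `‖P ⊕ 0‖`; finally `2 ‖P ⊕ 0‖ = ‖(A + B) ⊕ 0‖`.
-/

open scoped MatrixOrder

section

variable {m : Type*} [Fintype m] [DecidableEq m]

theorem exists_unitary_mul_conjTranspose_self_eq (Z : Matrix m m ℂ) :
    ∃ U : unitaryGroup m ℂ,
      Z * Zᴴ = (U : Matrix m m ℂ) * (Zᴴ * Z) * star (U : Matrix m m ℂ) := by
  have h₁ := isHermitian_mul_conjTranspose_self Z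
  have h₂ := isHermitian_conjTranspose_mul_self Z
  have heig : h₁.eigenvalues = h₂.eigenvalues :=
    (h₁.eigenvalues_eq_eigenvalues_iff h₂).2 (charpoly_mul_comm _ _)
  refine ⟨h₁.eigenvectorUnitary * star h₂.eigenvectorUnitary, ?_⟩
  have := Unitary.conjStarAlgAut_mul_apply (S := ℂ) h₁.eigenvectorUnitary
    (star h₂.eigenvectorUnitary) (Zᴴ * Z)
  rw [h₂.conjStarAlgAut_star_eigenvectorUnitary, ← heig, ← h₁.spectral_theorem] at this
  simpa [Matrix.mul_assoc] using this.symm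

namespace IsSymmetricNorm

variable {N : Matrix m m ℂ → ℝ}

theorem conj_unitary (hN : IsSymmetricNorm N) (U : unitaryGroup m ℂ) (A : Matrix m m ℂ) :
    N ((U : Matrix m m ℂ) * A * star (U : Matrix m m ℂ)) = N A := by
  rw [Matrix.mul_assoc]
  exact (hN.unitary_mul_left U _).trans (hN.mul_unitary_right (star U) A)

theorem mul_conjTranspose_self (hN : IsSymmetricNorm N) (Z : Matrix m m ℂ) :
    N (Z * Zᴴ) = N (Zᴴ * Z) := by
  obtain ⟨U, hU⟩ := exists_unitary_mul_conjTranspose_self_eq Z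
  rw [hU, hN.conj_unitary]

theorem half_add_le (hN : IsSymmetricNorm N) {Y Z : Matrix m m ℂ} (h : N Z = N Y) :
    N ((1 / 2 : ℂ) • (Y + Z)) ≤ N Y := by
  have := hN.add_le Y Z
  rw [hN.smul]
  norm_num
  linarith

theorem mul_starProjection_mul (hN : IsSymmetricNorm N) {Q P : Matrix m m ℂ}
    (hQ : IsSelfAdjoint Q) (hP : IsStarProjection P) : N (Q * P * Q) = N (P * (Q * Q) * P) := by
  have hQ' : Qᴴ = Q := hQ.star_eq
  have hP' : Pᴴ = P := hP.isSelfAdjoint.star_eq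
  have h₁ : (Q * P) * (Q * P)ᴴ = Q * P * Q := by
    rw [conjTranspose_mul, hQ', hP', Matrix.mul_assoc, ← Matrix.mul_assoc P,
      hP.isIdempotentElem.eq, Matrix.mul_assoc]
  have h₂ : (Q * P)ᴴ * (Q * P) = P * (Q * Q) * P := by
    rw [conjTranspose_mul, hQ', hP']
    simp only [Matrix.mul_assoc]
  rw [← h₁, ← h₂, hN.mul_conjTranspose_self]

end IsSymmetricNorm

end

section Blocks

variable {p : Type*} [Fintype p] [DecidableEq p]

theorem fromBlocks_one_zero_zero_neg_one_mem_unitaryGroup :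
    fromBlocks 1 0 0 (-1) ∈ unitaryGroup (p ⊕ p) ℂ := by
  simp [mem_unitaryGroup_iff, star_eq_conjTranspose, fromBlocks_conjTranspose, fromBlocks_multiply,
    ← fromBlocks_one]

theorem fromBlocks_zero_one_one_zero_mem_unitaryGroup :
    fromBlocks 0 1 1 0 ∈ unitaryGroup (p ⊕ p) ℂ := by
  simp [mem_unitaryGroup_iff, star_eq_conjTranspose, fromBlocks_conjTranspose, fromBlocks_multiply,
    ← fromBlocks_one]

namespace IsSymmetricNorm

variable {N : Matrix (p ⊕ p) (p ⊕ p) ℂ → ℝ}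

theorem fromBlocks_diag_le (hN : IsSymmetricNorm N) (a b c d : Matrix p p ℂ) :
    N (fromBlocks a 0 0 d) ≤ N (fromBlocks a b c d) := by
  let J : unitaryGroup (p ⊕ p) ℂ := ⟨_, fromBlocks_one_zero_zero_neg_one_mem_unitaryGroup⟩
  have hJ : fromBlocks a 0 0 d = (1 / 2 : ℂ) • (fromBlocks a b c d +
      (J : Matrix (p ⊕ p) (p ⊕ p) ℂ) * fromBlocks a b c d *
        star (J : Matrix (p ⊕ p) (p ⊕ p) ℂ)) := by
    simp only [J, star_eq_conjTranspose, fromBlocks_conjTranspose, fromBlocks_multiply,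
      fromBlocks_add, fromBlocks_smul]
    congr 1 <;> simp <;> module
  rw [hJ]
  exact hN.half_add_le (hN.conj_unitary J _)

theorem fromBlocks_corner_le (hN : IsSymmetricNorm N) (a d : Matrix p p ℂ) :
    N (fromBlocks a 0 0 0) ≤ N (fromBlocks a 0 0 d) := by
  let J : unitaryGroup (p ⊕ p) ℂ := ⟨_, fromBlocks_one_zero_zero_neg_one_mem_unitaryGroup⟩
  have hJ : fromBlocks a 0 0 0 = (1 / 2 : ℂ) • (fromBlocks a 0 0 d +
      fromBlocks a 0 0 d * (J : Matrix (p ⊕ p) (p ⊕ p) ℂ)) := by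
    simp only [J, fromBlocks_multiply, fromBlocks_add, fromBlocks_smul]
    congr 1 <;> simp
    module
  rw [hJ]
  exact hN.half_add_le (hN.mul_unitary_right J _)

theorem fromBlocks_zero_corner (hN : IsSymmetricNorm N) (d : Matrix p p ℂ) :
    N (fromBlocks 0 0 0 d) = N (fromBlocks d 0 0 0) := by
  let S : unitaryGroup (p ⊕ p) ℂ := ⟨_, fromBlocks_zero_one_one_zero_mem_unitaryGroup⟩
  have hS : (S : Matrix (p ⊕ p) (p ⊕ p) ℂ) * fromBlocks 0 0 0 d *
      star (S : Matrix (p ⊕ p) (p ⊕ p) ℂ) = fromBlocks d 0 0 0 := by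
    simp [S, star_eq_conjTranspose, fromBlocks_conjTranspose, fromBlocks_multiply]
  rw [← hS, hN.conj_unitary]

theorem fromBlocks_corner_mono (hN : IsSymmetricNorm N) {C D : Matrix p p ℂ}
    (hC : C.PosSemidef) (hD : D.PosSemidef) :
    N (fromBlocks C 0 0 0) ≤ N (fromBlocks (C + D) 0 0 0) := by
  -- `K = [√C 0; √D 0]` has `Kᴴ K = (C + D) ⊕ 0` while `K Kᴴ` has diagonal blocks `C` and `D`.
  set K : Matrix (p ⊕ p) (p ⊕ p) ℂ := fromBlocks (CFC.sqrt C) 0 (CFC.sqrt D) 0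
  have hCs := CFC.sqrt_mul_sqrt_self C hC.nonneg
  have hDs := CFC.sqrt_mul_sqrt_self D hD.nonneg
  have hCh : (CFC.sqrt C)ᴴ = CFC.sqrt C :=
    (IsSelfAdjoint.of_nonneg (CFC.sqrt_nonneg C)).star_eq
  have hDh : (CFC.sqrt D)ᴴ = CFC.sqrt D :=
    (IsSelfAdjoint.of_nonneg (CFC.sqrt_nonneg D)).star_eq
  have hKK : Kᴴ * K = fromBlocks (C + D) 0 0 0 := by
    simp [K, fromBlocks_conjTranspose, fromBlocks_multiply, hCh, hDh, hCs, hDs]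
  have hKK' :
      K * Kᴴ = fromBlocks C (CFC.sqrt C * CFC.sqrt D) (CFC.sqrt D * CFC.sqrt C) D := by
    simp [K, fromBlocks_conjTranspose, fromBlocks_multiply, hCh, hDh, hCs, hDs]
  calc N (fromBlocks C 0 0 0)
      ≤ N (fromBlocks C 0 0 D) := hN.fromBlocks_corner_le C D
    _ ≤ N (K * Kᴴ) := hKK' ▸ hN.fromBlocks_diag_le _ _ _ _
    _ = N (fromBlocks (C + D) 0 0 0) := by rw [hN.mul_conjTranspose_self, hKK]

theorem le_of_posSemidef_fromBlocks (hN : IsSymmetricNorm N) {A B C D : Matrix p p ℂ}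
    (hH : (fromBlocks A B C D).PosSemidef) :
    N (fromBlocks A B C D) ≤ N (fromBlocks A 0 0 0) + N (fromBlocks 0 0 0 D) := by
  set H := fromBlocks A B C D
  set Q := CFC.sqrt H
  have hQ : IsSelfAdjoint Q := IsSelfAdjoint.of_nonneg (CFC.sqrt_nonneg H)
  have hQQ : Q * Q = H := CFC.sqrt_mul_sqrt_self H hH.nonneg
  set P₁ : Matrix (p ⊕ p) (p ⊕ p) ℂ := fromBlocks 1 0 0 0
  set P₂ : Matrix (p ⊕ p) (p ⊕ p) ℂ := fromBlocks 0 0 0 1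
  have hP₁ : IsStarProjection P₁ := by
    simp [isStarProjection_iff', P₁, fromBlocks_multiply, star_eq_conjTranspose,
      fromBlocks_conjTranspose]
  have hP₂ : IsStarProjection P₂ := by
    simp [isStarProjection_iff', P₂, fromBlocks_multiply, star_eq_conjTranspose,
      fromBlocks_conjTranspose]
  have hP : P₁ + P₂ = 1 := by simp [P₁, P₂, fromBlocks_add]
  calc N H = N (Q * P₁ * Q + Q * P₂ * Q) := by
        rw [← Matrix.add_mul, ← Matrix.mul_add, hP, Matrix.mul_one, hQQ]
    _ ≤ N (Q * P₁ * Q) + N (Q * P₂ * Q) := hN.add_le _ _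
    _ = N (P₁ * H * P₁) + N (P₂ * H * P₂) := by
      rw [hN.mul_starProjection_mul hQ hP₁, hN.mul_starProjection_mul hQ hP₂, hQQ]
    _ = N (fromBlocks A 0 0 0) + N (fromBlocks 0 0 0 D) := by
      simp [H, P₁, P₂, fromBlocks_multiply]

end IsSymmetricNorm

end Blocks

theorem ofReal_sqrt_two_inv_mul_self : (Real.sqrt 2 : ℂ)⁻¹ * (Real.sqrt 2 : ℂ)⁻¹ = 1 / 2 := by
  rw [← mul_inv, ← Complex.ofReal_mul, Real.mul_self_sqrt zero_le_two]
  norm_num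

section BlockRotation

variable {p : Type*} [DecidableEq p]

variable (p) in
noncomputable def blockRotation : Matrix (p ⊕ p) (p ⊕ p) ℂ :=
  (Real.sqrt 2 : ℂ)⁻¹ • fromBlocks 1 1 (-1) 1

theorem star_blockRotation :
    star (blockRotation p) = (Real.sqrt 2 : ℂ)⁻¹ • fromBlocks 1 (-1) 1 1 := by
  simp [blockRotation, star_eq_conjTranspose, fromBlocks_conjTranspose]

variable [Fintype p]

theorem blockRotation_mem_unitaryGroup : blockRotation p ∈ unitaryGroup (p ⊕ p) ℂ := by
  rw [mem_unitaryGroup_iff, star_blockRotation, blockRotation, smul_mul_smul_comm,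
    ofReal_sqrt_two_inv_mul_self, fromBlocks_multiply, ← fromBlocks_one, fromBlocks_smul]
  congr 1 <;> simp <;> module

theorem blockRotation_mul_fromBlocks_mul_star (A X Y B : Matrix p p ℂ) :
    blockRotation p * fromBlocks A X Y B * star (blockRotation p) =
      fromBlocks ((1 / 2 : ℂ) • (A + B) + (1 / 2 : ℂ) • (X + Y))
        ((1 / 2 : ℂ) • (B - A + X - Y)) ((1 / 2 : ℂ) • (B - A - X + Y))
        ((1 / 2 : ℂ) • (A + B) - (1 / 2 : ℂ) • (X + Y)) := by
  rw [star_blockRotation, blockRotation, smul_mul_assoc, mul_smul_comm, smul_mul_assoc,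
    smul_smul, ofReal_sqrt_two_inv_mul_self, fromBlocks_multiply, fromBlocks_multiply,
    fromBlocks_smul]
  congr 1 <;> simp <;> module

end BlockRotation

theorem accretive_norm_bound {n : ℕ} (A B X : Matrix (Fin n) (Fin n) ℂ)
    (hM : (Matrix.fromBlocks A X Xᴴ B).PosSemidef)
    (hX : ((1 / 2 : ℂ) • (X + Xᴴ)).PosSemidef)
    (N : Matrix (Fin n ⊕ Fin n) (Fin n ⊕ Fin n) ℂ → ℝ) (hN : IsSymmetricNorm N) :
    N (Matrix.fromBlocks A X Xᴴ B) ≤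
      N (Matrix.fromBlocks (A + B) 0 0 0) +
        N (Matrix.fromBlocks ((1 / 2 : ℂ) • (X + Xᴴ)) 0 0 0) := by
  have hW := blockRotation_mul_fromBlocks_mul_star A X Xᴴ B
  set P := (1 / 2 : ℂ) • (A + B)
  set R := (1 / 2 : ℂ) • (X + Xᴴ)
  have hH := hM.mul_mul_conjTranspose_same (blockRotation (Fin n))
  rw [← star_eq_conjTranspose (blockRotation _), hW] at hH
  have hPR : (P - R).PosSemidef := hH.submatrix Sum.inr
  have hsplit : N (fromBlocks A X Xᴴ B) ≤
      N (fromBlocks (P + R) 0 0 0) + N (fromBlocks 0 0 0 (P - R)) := by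
    rw [← hN.conj_unitary ⟨_, blockRotation_mem_unitaryGroup⟩, hW]
    exact hN.le_of_posSemidef_fromBlocks hH
  have hadd : N (fromBlocks (P + R) 0 0 0) ≤
      N (fromBlocks P 0 0 0) + N (fromBlocks R 0 0 0) := by
    simpa [fromBlocks_add] using hN.add_le (fromBlocks P 0 0 0) (fromBlocks R 0 0 0)
  have hsub : N (fromBlocks 0 0 0 (P - R)) ≤ N (fromBlocks P 0 0 0) := by
    simpa [hN.fromBlocks_zero_corner] using hN.fromBlocks_corner_mono hPR hX
  have hAB : N (fromBlocks (A + B) 0 0 0) = 2 * N (fromBlocks P 0 0 0) := by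
    simpa [P, fromBlocks_smul, smul_smul] using hN.smul 2 (fromBlocks P 0 0 0)
  linarith
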